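/- Let 0 < α, β ≤ 1 with 1 < α + β ≤ 2, a < b. For all t, r ∈ [a,b], G(t,r) ≤ (b-a)^{α+β-1}/((α+β-1)Γ(α)Γ(β)), where G is the piecewise Green function G(t,r) = (1/(Γ(α)Γ(β))) ∫_a^{min(t,r)} (t-s)^{β-1}(r-s)^{α-1} ds. -/

import Mathlib

open Real MeasureTheory Set

noncomputable def G (a α β t r : ℝ) : ℝ :=
  (1 / (Real.Gamma α * Real.Gamma β)) *
    ∫ s in a..(min t r), (t - s) ^ (β - 1) * (r - s) ^ (α - 1)

/-
Both exponents `β - 1` and `α - 1` are nonpositive, so on `s < m = min t r` the integrand is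
dominated by `(m - s) ^ (α + β - 2)`, which is integrable because `α + β - 2 > -1` and integrates
to `(m - a) ^ (α + β - 1) / (α + β - 1) ≤ (b - a) ^ (α + β - 1) / (α + β - 1)`.
-/

lemma rpow_mul_rpow_le_rpow_add_of_nonpos {x y z p q : ℝ} (hx : 0 < x) (hxy : x ≤ y) (hxz : x ≤ z)
    (hp : p ≤ 0) (hq : q ≤ 0) : y ^ p * z ^ q ≤ x ^ (p + q) := by
  rw [rpow_add hx]
  exact mul_le_mul (rpow_le_rpow_of_nonpos hx hxy hp) (rpow_le_rpow_of_nonpos hx hxz hq)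
    (rpow_nonneg (hx.le.trans hxz) _) (rpow_nonneg hx.le _)

lemma integral_sub_rpow {a m e : ℝ} (he : -1 < e) :
    ∫ s in a..m, (m - s) ^ e = (m - a) ^ (e + 1) / (e + 1) := by
  rw [intervalIntegral.integral_comp_sub_left (fun x => x ^ e) m, sub_self,
    integral_rpow (Or.inl he), zero_rpow (by linarith), sub_zero]

lemma intervalIntegrable_sub_rpow {a m e : ℝ} (he : -1 < e) :
    IntervalIntegrable (fun s => (m - s) ^ e) volume a m := by
  simpa using ((intervalIntegral.intervalIntegrable_rpow' he (a := 0) (b := m - a)).comp_sub_left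
    m).symm

lemma integral_sub_rpow_mul_sub_rpow_le {a t r p q : ℝ} (hat : a ≤ t) (har : a ≤ r)
    (hp : p ≤ 0) (hq : q ≤ 0) (hpq : -1 < p + q) :
    ∫ s in a..min t r, (t - s) ^ p * (r - s) ^ q ≤
      (min t r - a) ^ (p + q + 1) / (p + q + 1) := by
  set m := min t r
  have ham : a ≤ m := le_min hat har
  rw [← integral_sub_rpow hpq, intervalIntegral.integral_of_le ham,
    intervalIntegral.integral_of_le ham, integral_Ioc_eq_integral_Ioo,
    integral_Ioc_eq_integral_Ioo]
  refine integral_mono_of_nonneg ?_ ?_ ?_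
  · filter_upwards [ae_restrict_mem measurableSet_Ioo] with s hs
    have hms : 0 < m - s := sub_pos.2 hs.2
    exact mul_nonneg (rpow_nonneg (by linarith [min_le_left t r]) _)
      (rpow_nonneg (by linarith [min_le_right t r]) _)
  · exact ((intervalIntegrable_sub_rpow hpq).1).mono_set Ioo_subset_Ioc_self
  · filter_upwards [ae_restrict_mem measurableSet_Ioo] with s hs
    exact rpow_mul_rpow_le_rpow_add_of_nonpos (sub_pos.2 hs.2)
      (by linarith [min_le_left t r]) (by linarith [min_le_right t r]) hp hq

theorem stmt_5_general (a b α β : ℝ) (hα0 : 0 < α) (hα1 : α ≤ 1) (hβ0 : 0 < β) (hβ1 : β ≤ 1)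
    (hs1 : 1 < α + β) :
    ∀ t ∈ Icc a b, ∀ r ∈ Icc a b,
      G a α β t r ≤ (b - a) ^ (α + β - 1) / ((α + β - 1) * Real.Gamma α * Real.Gamma β) := by
  intro t ht r hr
  have hΓ : 0 < Real.Gamma α * Real.Gamma β :=
    mul_pos (Gamma_pos_of_pos hα0) (Gamma_pos_of_pos hβ0)
  have hexp : β - 1 + (α - 1) + 1 = α + β - 1 := by ring
  have hint := integral_sub_rpow_mul_sub_rpow_le ht.1 hr.1 (sub_nonpos.2 hβ1) (sub_nonpos.2 hα1)
    (by linarith)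
  rw [hexp] at hint
  calc G a α β t r
        ≤ 1 / (Real.Gamma α * Real.Gamma β) * ((b - a) ^ (α + β - 1) / (α + β - 1)) := by
        unfold G
        gcongr
        refine hint.trans ?_
        gcongr
        · exact sub_nonneg.2 (le_min ht.1 hr.1)
        · exact (min_le_left t r).trans ht.2
    _ = (b - a) ^ (α + β - 1) / ((α + β - 1) * Real.Gamma α * Real.Gamma β) := by
        rw [one_div_mul_eq_div, div_div, mul_assoc]

theorem stmt_5 (a b α β : ℝ) (hα0 : 0 < α) (hα1 : α ≤ 1) (hβ0 : 0 < β) (hβ1 : β ≤ 1)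
    (hs1 : 1 < α + β) (hs2 : α + β ≤ 2) (hab : a < b) :
    ∀ t ∈ Icc a b, ∀ r ∈ Icc a b,
      G a α β t r ≤ (b - a) ^ (α + β - 1) / ((α + β - 1) * Real.Gamma α * Real.Gamma β) :=
  stmt_5_general a b α β hα0 hα1 hβ0 hβ1 hs1
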